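/- There exists a constant C > 0, depending only on Δ, p₀ and σ, such that for every convex function u continuous on the closed polytope with u ≥ u(p₀) = 0 one has ∫_Δ u dμ ≤ C ∫_{∂Δ} u dσ. -/

import Mathlib

open MeasureTheory Filter
open scoped ENNReal Topology

noncomputable section

namespace ToricKS

/-- Euclidean space `ℝⁿ`. -/
abbrev E (n : ℕ) : Type := EuclideanSpace ℝ (Fin n)

/-- The open polytope `Δ = {x | ⟨ν k, x⟩ > c k for all k}`. -/
def Poly {n d : ℕ} (ν : Fin d → E n) (c : Fin d → ℝ) : Set (E n) :=
  {x | ∀ k, c k < (inner ℝ (ν k) x : ℝ)}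

/-- The facet `F k = closure Δ ∩ {x | ⟨ν k, x⟩ = c k}`. -/
def Facet {n d : ℕ} (ν : Fin d → E n) (c : Fin d → ℝ) (k : Fin d) : Set (E n) :=
  closure (Poly ν c) ∩ {x | (inner ℝ (ν k) x : ℝ) = c k}

/-- The boundary measure `σ`: on each facet `F k`, `‖ν k‖⁻¹` times the
`(n-1)`-dimensional Hausdorff measure. -/
def bdryMeasure {n d : ℕ} (ν : Fin d → E n) (c : Fin d → ℝ) : Measure (E n) :=
  ∑ k, ENNReal.ofReal (‖ν k‖⁻¹) •
    ((MeasureTheory.Measure.hausdorffMeasure ((n : ℝ) - 1)).restrict (Facet ν c k))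

/-- The partial derivative `∂f/∂x_i`. -/
def pder {n : ℕ} (i : Fin n) (f : E n → ℝ) (x : E n) : ℝ :=
  fderiv ℝ f x (EuclideanSpace.single i 1)

/-- The Hessian matrix `(∂²f/∂x_i∂x_j)`. -/
def hessM {n : ℕ} (f : E n → ℝ) (x : E n) : Matrix (Fin n) (Fin n) ℝ :=
  Matrix.of fun i j => pder i (pder j f) x

/-- The linear functional `L_A(u) = ∫_{∂Δ} u dσ - ∫_Δ A u dμ`. -/
def LA {n d : ℕ} (ν : Fin d → E n) (c : Fin d → ℝ) (A u : E n → ℝ) : ℝ :=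
  ∫ x, u x ∂(bdryMeasure ν c) - ∫ x in Poly ν c, A x * u x

/-- The boundary norm `‖u‖_b = ∫_{∂Δ} u dσ`. -/
def normB {n d : ℕ} (ν : Fin d → E n) (c : Fin d → ℝ) (u : E n → ℝ) : ℝ :=
  ∫ x, u x ∂(bdryMeasure ν c)

/-- The class `C̃` of normalized convex functions: continuous on the closed polytope,
smooth inside, with `u ≥ u(p₀) = 0`. -/
def Ctilde {n d : ℕ} (ν : Fin d → E n) (c : Fin d → ℝ) (p₀ : E n) : Set (E n → ℝ) :=
  {u | ConvexOn ℝ (closure (Poly ν c)) u ∧ ContinuousOn u (closure (Poly ν c)) ∧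
       ContDiffOn ℝ (⊤ : ℕ∞) u (Poly ν c) ∧ u p₀ = 0 ∧ ∀ x ∈ closure (Poly ν c), 0 ≤ u x}

/-- The Guillemin function `u₀(x) = Σ_k δ_k(x) log δ_k(x)`, `δ_k(x) = ⟨ν k, x⟩ - c k`. -/
def GuilleminU0 {n d : ℕ} (ν : Fin d → E n) (c : Fin d → ℝ) (x : E n) : ℝ :=
  ∑ k, ((inner ℝ (ν k) x : ℝ) - c k) * Real.log ((inner ℝ (ν k) x : ℝ) - c k)

/-- The class `S`: continuous convex functions on the closed polytope, smooth with
positive definite Hessian inside, with `u - u₀` extending smoothly to the closed polytope. -/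
def SpaceS {n d : ℕ} (ν : Fin d → E n) (c : Fin d → ℝ) : Set (E n → ℝ) :=
  {v | ConvexOn ℝ (closure (Poly ν c)) v ∧ ContinuousOn v (closure (Poly ν c)) ∧
       ContDiffOn ℝ (⊤ : ℕ∞) v (Poly ν c) ∧ (∀ x ∈ Poly ν c, (hessM v x).PosDef) ∧
       ∃ g : E n → ℝ, ContDiffOn ℝ (⊤ : ℕ∞) g (closure (Poly ν c)) ∧
         ∀ x ∈ closure (Poly ν c), v x - GuilleminU0 ν c x = g x}

/-- `v` solves the Abreu equation `Σ_{i,j} ∂²v^{ij}/∂x_i∂x_j = -A` on `Δ`,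
where `(v^{ij})` is the pointwise inverse of the Hessian of `v`. -/
def AbreuSol {n d : ℕ} (ν : Fin d → E n) (c : Fin d → ℝ) (A v : E n → ℝ) : Prop :=
  ∀ x ∈ Poly ν c, ∑ i, ∑ j, pder i (pder j (fun y => (hessM v y)⁻¹ i j)) x = -A x

/-- The class `C_*^P`: locally uniform limits on `Δ` of sequences in `C̃` with
boundary norm at most `P`. -/
def CstarP {n d : ℕ} (ν : Fin d → E n) (c : Fin d → ℝ) (p₀ : E n) (P : ℝ) : Set (E n → ℝ) :=
  {u | ConvexOn ℝ (Poly ν c) u ∧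
       ∃ uk : ℕ → E n → ℝ, (∀ k, uk k ∈ Ctilde ν c p₀ ∧ normB ν c (uk k) ≤ P) ∧
         TendstoLocallyUniformlyOn uk u atTop (Poly ν c)}

/-- Extension of `u` to a boundary point `q` along the ray from `p₀`:
`u(q) = lim_{t→1⁻} u(p₀ + t(q - p₀)) ∈ [0,∞]`. -/
def bdryExt {n : ℕ} (p₀ : E n) (u : E n → ℝ) (q : E n) : ℝ≥0∞ :=
  limsup (fun t : ℝ => ENNReal.ofReal (u (p₀ + t • (q - p₀)))) (nhdsWithin 1 (Set.Iio 1))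

/-- `L_A(u)` for `u ∈ C_*^P`, using the boundary extension of `u`. -/
def LAstar {n d : ℕ} (ν : Fin d → E n) (c : Fin d → ℝ) (p₀ : E n) (A u : E n → ℝ) : ℝ :=
  (∫⁻ q, bdryExt p₀ u q ∂(bdryMeasure ν c)).toReal - ∫ x in Poly ν c, A x * u x

/-- The Mabuchi functional `F_A(u) = -∫_Δ log det(∂²u/∂x_i∂x_j) dμ + L_A(u)`. -/
def MabuchiF {n d : ℕ} (ν : Fin d → E n) (c : Fin d → ℝ) (A u : E n → ℝ) : ℝ :=
  -(∫ x in Poly ν c, Real.log (hessM u x).det) + LA ν c A u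


section Aux
open scoped NNReal
variable {m : ℕ}


open scoped Classical in
/-- A linear isometry sending `single 0 1` to a given unit vector `e`. -/
def rotA (e : E (m+1)) : E (m+1) ≃ₗᵢ[ℝ] E (m+1) :=
  if h : EuclideanSpace.single (0 : Fin (m+1)) (1:ℝ) = e then LinearIsometryEquiv.refl ℝ _
  else Submodule.reflection (ℝ ∙ (EuclideanSpace.single (0 : Fin (m+1)) (1:ℝ) - e))ᗮ

lemma rotA_single {e : E (m+1)} (he : ‖e‖ = 1) :
    rotA e (EuclideanSpace.single (0 : Fin (m+1)) (1:ℝ)) = e := by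
  unfold rotA
  by_cases h : EuclideanSpace.single (0 : Fin (m+1)) (1:ℝ) = e
  · rw [dif_pos h]; simpa using h
  · rw [dif_neg h]
    exact Submodule.reflection_sub (by rw [EuclideanSpace.norm_single, norm_one, he])

lemma inner_rotA {e : E (m+1)} (he : ‖e‖ = 1) (w : E (m+1)) :
    (inner ℝ e (rotA e w) : ℝ) = w 0 := by
  have h2 := LinearIsometryEquiv.inner_map_map (𝕜 := ℝ) (rotA e)
    (EuclideanSpace.single (0 : Fin (m+1)) (1:ℝ)) w
  rw [rotA_single he] at h2
  rw [h2, EuclideanSpace.inner_single_left]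
  simp

/-- Affine isometric embedding of `ℝ^m` as the hyperplane `{x | ⟪e, x⟫ = c'}`. -/
def embB (e : E (m+1)) (c' : ℝ) : E m → E (m+1) := fun y =>
  rotA e ((WithLp.equiv 2 _).symm (Fin.cons c' ((WithLp.equiv 2 _) y)))

lemma embB_isometry (e : E (m+1)) (c' : ℝ) : Isometry (embB e c') := by
  refine Isometry.of_dist_eq fun y y' => ?_
  unfold embB
  rw [(rotA e).isometry.dist_eq]
  rw [EuclideanSpace.dist_eq, EuclideanSpace.dist_eq]
  congr 1
  rw [Fin.sum_univ_succ]
  simp [WithLp.equiv_symm_apply, PiLp.toLp_apply, WithLp.equiv_apply]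

lemma inner_embB {e : E (m+1)} (he : ‖e‖ = 1) (c' : ℝ) (y : E m) :
    (inner ℝ e (embB e c' y) : ℝ) = c' := by
  unfold embB
  rw [inner_rotA he]
  simp [WithLp.equiv_symm_apply, PiLp.toLp_apply]

lemma mem_range_embB {e : E (m+1)} (he : ‖e‖ = 1) (c' : ℝ) {x : E (m+1)}
    (hx : (inner ℝ e x : ℝ) = c') : x ∈ Set.range (embB e c') := by
  set w : E (m+1) := (rotA e).symm x with hw
  have hw0 : w 0 = c' := by
    have := inner_rotA he w
    rw [hw] at this ⊢
    rw [(rotA e).apply_symm_apply] at this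
    rw [← this, hx]
  refine ⟨(WithLp.equiv 2 _).symm (fun j => w j.succ), ?_⟩
  unfold embB
  have : ((WithLp.equiv 2 _).symm (Fin.cons c'
      ((WithLp.equiv 2 _) ((WithLp.equiv (2:ℝ≥0∞) _).symm (fun j => w j.succ)))) : E (m+1)) = w := by
    apply (WithLp.equiv 2 _).injective
    funext j
    refine Fin.cases ?_ (fun i => ?_) j <;>
      simp [WithLp.equiv_symm_apply, PiLp.toLp_apply, WithLp.equiv_apply, hw0]
  rw [this, hw, (rotA e).apply_symm_apply]

lemma det_aux (t : ℝ) (v : Fin (m+1) → ℝ) :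
    (Matrix.of fun i j : Fin (m+1) => if j = 0 then v i else if i = j then t else 0).det
      = v 0 * t ^ m := by
  rw [Matrix.det_succ_column_zero]
  rw [Finset.sum_eq_single 0]
  · simp only [Matrix.of_apply, if_pos rfl, Fin.val_zero, pow_zero, one_mul]
    have : ((Matrix.of fun i j : Fin (m+1) => if j = 0 then v i else if i = j then t else 0).submatrix
        (Fin.succAbove 0) Fin.succ) = Matrix.diagonal (fun _ => t) := by
      ext i' j'
      simp only [Matrix.submatrix_apply, Matrix.of_apply, Fin.succAbove_zero, Matrix.diagonal_apply]
      rw [if_neg (Fin.succ_ne_zero j')]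
      by_cases h : i' = j'
      · simp [h]
      · rw [if_neg (by simpa using h), if_neg h]
    rw [this, Matrix.det_diagonal]
    simp
  · intro i _ hi
    obtain ⟨j, rfl⟩ : ∃ j : Fin m, j.succ = i := by
      rcases Fin.eq_succ_of_ne_zero hi with ⟨j, rfl⟩; exact ⟨j, rfl⟩
    haveI : NeZero m := NeZero.of_pos j.pos
    have hrow : ∀ j', ((Matrix.of fun i j : Fin (m+1) => if j = 0 then v i else if i = j then t
        else 0).submatrix (Fin.succAbove j.succ) Fin.succ) 0 j' = 0 := by
      intro j'
      simp only [Matrix.submatrix_apply, Matrix.of_apply]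
      rw [if_neg (Fin.succ_ne_zero j')]
      rw [if_neg]
      intro h
      have h0 : (Fin.succ j).succAbove 0 = 0 := by
        rw [Fin.succAbove_of_castSucc_lt]
        · rfl
        · simpa using Fin.succ_pos j
      rw [h0] at h
      exact (Fin.succ_ne_zero j') h.symm
    rw [Matrix.det_eq_zero_of_row_eq_zero 0 hrow]
    ring
  · simp


lemma hausdorff_haar :
    MeasureTheory.Measure.IsAddHaarMeasure (μH[(m:ℝ)] : Measure (E m)) := by
  have h := MeasureTheory.isAddHaarMeasure_hausdorffMeasure (E := E m)
  have hk : ((Module.finrank ℝ (E m) : ℝ)) = (m:ℝ) := by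
    rw [finrank_euclideanSpace_fin]
  rwa [hk] at h

/-- Comparison: volume on `E m` is a finite multiple of `μH[m]`. -/
lemma volume_eq_smul_hausdorff :
    ∃ κ : ℝ≥0, (volume : Measure (E m)) = κ • (μH[(m:ℝ)] : Measure (E m)) := by
  haveI := hausdorff_haar (m := m)
  exact ⟨_, MeasureTheory.Measure.isAddLeftInvariant_eq_smul volume (μH[(m:ℝ)] : Measure (E m))⟩

lemma lintegral_isometry_le {β : E m → E (m+1)} (hβ : Isometry β) :
    ∃ κ : ℝ≥0∞, κ ≠ ⊤ ∧ ∀ G : E (m+1) → ℝ≥0∞, Measurable G →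
      ∫⁻ y, G (β y) ≤ κ * ∫⁻ x, G x ∂(μH[(m:ℝ)] : Measure (E (m+1))) := by
  obtain ⟨κ, hκ⟩ := volume_eq_smul_hausdorff (m := m)
  refine ⟨κ, ENNReal.coe_ne_top, fun G hG => ?_⟩
  have hβm : Measurable β := hβ.continuous.measurable
  rw [← MeasureTheory.lintegral_map hG hβm]
  have hle : (volume : Measure (E m)).map β ≤
      (κ : ℝ≥0∞) • (μH[(m:ℝ)] : Measure (E (m+1))) := by
    refine Measure.le_iff.2 fun S hS => ?_
    rw [Measure.map_apply hβm hS, hκ]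
    simp only [Measure.smul_apply, smul_eq_mul]
    refine mul_le_mul_right ?_ _
    calc μH[(m:ℝ)] (β ⁻¹' S)
        = μH[(m:ℝ)] (β '' (β ⁻¹' S)) :=
          (hβ.hausdorffMeasure_image (Or.inl (by positivity)) _).symm
      _ ≤ μH[(m:ℝ)] S := measure_mono (Set.image_preimage_subset _ _)
  calc ∫⁻ x, G x ∂((volume : Measure (E m)).map β)
      ≤ ∫⁻ x, G x ∂((κ : ℝ≥0∞) • (μH[(m:ℝ)] : Measure (E (m+1)))) := lintegral_mono' hle le_rfl
    _ = κ * ∫⁻ x, G x ∂(μH[(m:ℝ)] : Measure (E (m+1))) := lintegral_smul_measure _ _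

lemma hausdorff_finite_of_bounded {S : Set (E (m+1))} {β : E m → E (m+1)} (hβ : Isometry β)
    (hSb : Bornology.IsBounded S) (hSr : S ⊆ Set.range β) :
    μH[(m:ℝ)] S ≠ ⊤ := by
  haveI := hausdorff_haar (m := m)
  have h1 : μH[(m:ℝ)] S = μH[(m:ℝ)] (β ⁻¹' S) := by
    rw [← hβ.hausdorffMeasure_image (Or.inl (by positivity)) (β ⁻¹' S),
      Set.image_preimage_eq_of_subset hSr]
  rw [h1]
  have hb : Bornology.IsBounded (β ⁻¹' S) := (hβ.antilipschitz.isBounded_preimage hSb)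
  obtain ⟨R, hR⟩ := hb.subset_closedBall (0 : E m)
  exact ((measure_mono hR).trans_lt (isCompact_closedBall _ _).measure_lt_top).ne

/-- tail coordinates -/
def tailE (z : E (m+1)) : E m := (WithLp.equiv 2 _).symm (fun j => z j.succ)

lemma slab_fubini (F2 : E m → ℝ≥0∞) (hF2 : Measurable F2) :
    ∫⁻ z : E (m+1), (Set.Ioc (0:ℝ) 1).indicator 1 (z 0) * F2 (tailE z)
      = ∫⁻ y : E m, F2 y := by
  set Φ : E (m+1) → ℝ≥0∞ := fun z => (Set.Ioc (0:ℝ) 1).indicator 1 (z 0) * F2 (tailE z) with hΦ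
  have step1 : ∫⁻ z : E (m+1), Φ z
      = ∫⁻ w : Fin (m+1) → ℝ, Φ ((MeasurableEquiv.toLp 2 (Fin (m+1) → ℝ)) w) := by
    exact ((EuclideanSpace.volume_preserving_symm_measurableEquiv_toLp (Fin (m+1))).symm _|>.lintegral_comp_emb
      (MeasurableEquiv.measurableEmbedding _) Φ).symm
  have step2 : ∫⁻ w : Fin (m+1) → ℝ, Φ ((MeasurableEquiv.toLp 2 (Fin (m+1) → ℝ)) w)
      = ∫⁻ p : ℝ × (Fin m → ℝ),
          Φ ((MeasurableEquiv.toLp 2 (Fin (m+1) → ℝ))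
            ((MeasurableEquiv.piFinSuccAbove (fun _ : Fin (m+1) => ℝ) 0).symm p))
          ∂((volume : Measure ℝ).prod (volume : Measure (Fin m → ℝ))) := by
    exact ((measurePreserving_piFinSuccAbove (fun _ : Fin (m+1) => (volume : Measure ℝ)) 0).symm _|>.lintegral_comp_emb
      (MeasurableEquiv.measurableEmbedding _) _).symm
  have key : ∀ p : ℝ × (Fin m → ℝ),
      Φ ((MeasurableEquiv.toLp 2 (Fin (m+1) → ℝ))
        ((MeasurableEquiv.piFinSuccAbove (fun _ : Fin (m+1) => ℝ) 0).symm p))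
      = (Set.Ioc (0:ℝ) 1).indicator 1 p.1 * F2 ((WithLp.equiv 2 _).symm p.2) := by
    rintro ⟨a, b⟩
    have hz : ∀ j, ((MeasurableEquiv.toLp 2 (Fin (m+1) → ℝ))
        ((MeasurableEquiv.piFinSuccAbove (fun _ : Fin (m+1) => ℝ) 0).symm (a, b))) j
        = (Fin.insertNth (α := fun _ => ℝ) 0 a b) j := by
      intro j; rfl
    rw [hΦ]
    simp only
    have h0 : ((MeasurableEquiv.toLp 2 (Fin (m+1) → ℝ))
        ((MeasurableEquiv.piFinSuccAbove (fun _ : Fin (m+1) => ℝ) 0).symm (a, b))) 0 = a := by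
      rw [hz 0, Fin.insertNth_apply_same]
    have h1 : tailE ((MeasurableEquiv.toLp 2 (Fin (m+1) → ℝ))
        ((MeasurableEquiv.piFinSuccAbove (fun _ : Fin (m+1) => ℝ) 0).symm (a, b)))
        = (WithLp.equiv 2 _).symm b := by
      apply (WithLp.equiv 2 _).injective
      funext j
      have h2 := hz j.succ
      simp only [tailE, WithLp.equiv_symm_apply, PiLp.toLp_apply, WithLp.equiv_apply]
      rw [h2, ← Fin.zero_succAbove j, Fin.insertNth_apply_succAbove]
    rw [h0, h1]
  rw [step1, step2]
  calc ∫⁻ p : ℝ × (Fin m → ℝ), Φ _ ∂_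
      = ∫⁻ p : ℝ × (Fin m → ℝ), (Set.Ioc (0:ℝ) 1).indicator 1 p.1
          * F2 ((WithLp.equiv 2 _).symm p.2)
          ∂((volume : Measure ℝ).prod (volume : Measure (Fin m → ℝ))) := by
        exact lintegral_congr key
    _ = (∫⁻ a : ℝ, (Set.Ioc (0:ℝ) 1).indicator 1 a)
          * ∫⁻ b : Fin m → ℝ, F2 ((WithLp.equiv 2 _).symm b) := by
        exact lintegral_prod_mul
          ((measurable_one.indicator measurableSet_Ioc).aemeasurable)
          ((hF2.comp (MeasurableEquiv.measurableEmbedding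
            (MeasurableEquiv.toLp 2 (Fin m → ℝ))).measurable).aemeasurable)
    _ = ∫⁻ y : E m, F2 y := by
        rw [lintegral_indicator_one measurableSet_Ioc, Real.volume_Ioc]
        norm_num
        exact (EuclideanSpace.volume_preserving_symm_measurableEquiv_toLp (Fin m)).symm _|>.lintegral_comp_emb
          (MeasurableEquiv.measurableEmbedding _) F2

lemma poly_open {n d : ℕ} (ν : Fin d → E n) (c : Fin d → ℝ) : IsOpen (Poly ν c) := by
  have h : Poly ν c = ⋂ k, (fun y : E n => (inner ℝ (ν k) y : ℝ)) ⁻¹' Set.Ioi (c k) := by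
    ext y; simp [Poly, Set.mem_iInter, Set.mem_preimage, Set.mem_Ioi]
  rw [h]
  exact isOpen_iInter_of_finite fun k =>
    isOpen_Ioi.preimage (Continuous.inner continuous_const continuous_id)

lemma poly_convex {n d : ℕ} (ν : Fin d → E n) (c : Fin d → ℝ) : Convex ℝ (Poly ν c) := by
  have h : Poly ν c = ⋂ k, {y : E n | c k < (inner ℝ (ν k) y : ℝ)} := by
    ext y; simp [Poly, Set.mem_iInter]
  rw [h]
  refine convex_iInter fun k => convex_halfSpace_gt ⟨fun x y => inner_add_right _ _ _, ?_⟩ (c k)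
  intro a x
  exact real_inner_smul_right _ _ _

lemma closure_poly_subset {n d : ℕ} (ν : Fin d → E n) (c : Fin d → ℝ) (k : Fin d) :
    closure (Poly ν c) ⊆ {y : E n | c k ≤ (inner ℝ (ν k) y : ℝ)} :=
  closure_minimal (fun y hy => (hy k).le)
    (isClosed_le continuous_const (Continuous.inner continuous_const continuous_id))

lemma ray_exit {n d : ℕ} (ν : Fin d → E n) (c : Fin d → ℝ)
    (hb : Bornology.IsBounded (closure (Poly ν c))) {p₀ x : E n}
    (hx : x ∈ Poly ν c) (hxp : x ≠ p₀) :
    ∃ k, ∃ q ∈ Facet ν c k, ∃ t ∈ Set.Ioc (0:ℝ) 1, x = p₀ + t • (q - p₀) := by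
  set R : ℝ → E n := fun t => p₀ + t • (x - p₀) with hR
  have hRcont : Continuous R := continuous_const.add (continuous_id.smul continuous_const)
  set S := {t : ℝ | R t ∈ closure (Poly ν c)} with hSdef
  have hxe : 0 < ‖x - p₀‖ := norm_pos_iff.2 (sub_ne_zero.2 hxp)
  have hS1 : (1:ℝ) ∈ S := by
    have : R 1 = x := by rw [hR]; simp
    simp only [hSdef, Set.mem_setOf_eq, this]
    exact subset_closure hx
  have hSclosed : IsClosed S := isClosed_closure.preimage hRcont
  have hSbdd : BddAbove S := by
    obtain ⟨Rad, hRad⟩ := hb.subset_closedBall p₀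
    refine ⟨Rad / ‖x - p₀‖, fun t ht => ?_⟩
    have h1 : R t ∈ Metric.closedBall p₀ Rad := hRad ht
    have h2 : ‖t • (x - p₀)‖ ≤ Rad := by
      have h3 := mem_closedBall_iff_norm.1 h1
      have h4 : R t - p₀ = t • (x - p₀) := by simp only [hR]; abel
      rwa [h4] at h3
    rw [norm_smul, Real.norm_eq_abs] at h2
    calc t ≤ |t| := le_abs_self t
      _ ≤ Rad / ‖x - p₀‖ := by rw [le_div_iff₀ hxe]; exact h2
  set τ := sSup S with hτ
  have hτS : τ ∈ S := hSclosed.csSup_mem ⟨1, hS1⟩ hSbdd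
  have hτ1 : 1 ≤ τ := le_csSup hSbdd hS1
  have hτpos : 0 < τ := lt_of_lt_of_le one_pos hτ1
  have hk : ∃ k, (inner ℝ (ν k) (R τ) : ℝ) = c k := by
    by_contra hcon
    push_neg at hcon
    have hmem : R τ ∈ Poly ν c := fun k =>
      lt_of_le_of_ne (closure_poly_subset ν c k hτS) (Ne.symm (hcon k))
    obtain ⟨ε, hε, hball⟩ := Metric.isOpen_iff.1 (poly_open ν c) (R τ) hmem
    set δ := ε / (2 * ‖x - p₀‖) with hδdef
    have hδ : 0 < δ := by positivity
    have hmem2 : R (τ + δ) ∈ Poly ν c := by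
      apply hball
      rw [Metric.mem_ball, dist_eq_norm]
      have h5 : R (τ + δ) - R τ = δ • (x - p₀) := by
        simp only [hR, add_smul]; abel
      rw [h5, norm_smul, Real.norm_eq_abs, abs_of_pos hδ, hδdef]
      have heq : ε / (2 * ‖x - p₀‖) * ‖x - p₀‖ = ε / 2 := by
        field_simp
      rw [heq]
      linarith
    have h6 : τ + δ ∈ S := subset_closure hmem2
    have := le_csSup hSbdd h6
    linarith
  obtain ⟨k, hk⟩ := hk
  refine ⟨k, R τ, ⟨hτS, hk⟩, τ⁻¹, ⟨inv_pos.2 hτpos, ?_⟩, ?_⟩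
  · rw [inv_le_one_iff₀]
    right; exact hτ1
  · have h7 : R τ - p₀ = τ • (x - p₀) := by simp only [hR]; abel
    rw [h7, smul_smul, inv_mul_cancel₀ hτpos.ne', one_smul]
    abel

lemma exists_extension {n : ℕ} {s : Set (E n)} (hs : IsClosed s) {u : E n → ℝ}
    (hu : ContinuousOn u s) :
    ∃ v : E n → ℝ, Measurable v ∧ (∀ x ∈ s, v x = u x) ∧ ∀ x ∉ s, v x = 0 := by
  refine ⟨Function.extend (Subtype.val : s → E n) (fun x => u x) (fun _ => 0), ?_, ?_, ?_⟩
  · exact (MeasurableEmbedding.subtype_coe hs.measurableSet).measurable_extend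
      (continuousOn_iff_continuous_restrict.1 hu).measurable measurable_const
  · intro x hx
    exact Subtype.val_injective.extend_apply (fun x : s => u x) (fun _ => 0) ⟨x, hx⟩
  · intro x hx
    apply Function.extend_apply'
    rintro ⟨a, rfl⟩
    exact hx a.2

lemma bdry_null_compl {n d : ℕ} (ν : Fin d → E n) (c : Fin d → ℝ) :
    bdryMeasure ν c (closure (Poly ν c))ᶜ = 0 := by
  rw [bdryMeasure]
  rw [Measure.finset_sum_apply]
  refine Finset.sum_eq_zero fun k _ => ?_
  rw [Measure.smul_apply,
    Measure.restrict_apply isClosed_closure.isOpen_compl.measurableSet]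
  have h : (closure (Poly ν c))ᶜ ∩ Facet ν c k = ∅ := by
    rw [Set.eq_empty_iff_forall_notMem]
    rintro y ⟨hy1, hy2, -⟩
    exact hy1 hy2
  rw [h, measure_empty, smul_zero]

lemma facet_closed {n d : ℕ} (ν : Fin d → E n) (c : Fin d → ℝ) (k : Fin d) :
    IsClosed (Facet ν c k) :=
  isClosed_closure.inter (isClosed_eq (Continuous.inner continuous_const continuous_id)
    continuous_const)

lemma if_entry_aux (i j : Fin (m+1)) (a t : ℝ) :
    (if 0 = j then (1:ℝ) else 0) * a
      + t * ((if i = j then (1:ℝ) else 0) - (if 0 = j then (1:ℝ) else 0) * (if i = 0 then (1:ℝ) else 0))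
      = if j = 0 then a else if i = j then t else 0 := by
  by_cases hj : j = 0
  · subst hj
    by_cases hi : i = 0 <;> simp [hi]
  · have hj' : ¬((0 : Fin (m+1)) = j) := fun h => hj h.symm
    by_cases hi : i = j <;> simp [hi, hj, hj']

set_option maxHeartbeats 2000000 in
/-- Main per-facet estimate. -/
lemma facet_bound {d : ℕ} (ν : Fin d → E (m+1)) (c : Fin d → ℝ) (p₀ : E (m+1))
    (hp₀ : p₀ ∈ Poly ν c) (k : Fin d) :
    ∃ C : ℝ≥0∞, C ≠ ⊤ ∧ ∃ T : Set (E (m+1)),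
      (∀ q ∈ Facet ν c k, ∀ t ∈ Set.Ioc (0:ℝ) 1, p₀ + t • (q - p₀) ∈ T) ∧
      ∀ v : E (m+1) → ℝ, Measurable v →
        (∀ q ∈ closure (Poly ν c), ∀ t ∈ Set.Ioc (0:ℝ) 1,
          v (p₀ + t • (q - p₀)) ≤ v q) →
        ∫⁻ x in T, ENNReal.ofReal (v x) ≤
          C * ∫⁻ x, ENNReal.ofReal (v x) ∂(bdryMeasure ν c) := by
  by_cases hν : ν k = 0
  · refine ⟨0, by simp, ∅, ?_, fun v _ _ => by simp⟩
    intro q hq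
    exfalso
    have h1 : (inner ℝ (ν k) q : ℝ) = c k := hq.2
    rw [hν, inner_zero_left] at h1
    have h2 := hp₀ k
    rw [hν, inner_zero_left] at h2
    linarith
  -- main case
  have hn0 : (0:ℝ) < ‖ν k‖ := norm_pos_iff.2 hν
  set e : E (m+1) := ‖ν k‖⁻¹ • ν k with he_def
  have he : ‖e‖ = 1 := by
    rw [he_def, norm_smul, norm_inv, norm_norm, inv_mul_cancel₀ hn0.ne']
  set c' : ℝ := ‖ν k‖⁻¹ * c k with hc'_def
  have inner_e : ∀ x : E (m+1), (inner ℝ e x : ℝ) = ‖ν k‖⁻¹ * (inner ℝ (ν k) x : ℝ) := by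
    intro x; rw [he_def, real_inner_smul_left]
  have hplane : ∀ x : E (m+1), (inner ℝ (ν k) x : ℝ) = c k ↔ (inner ℝ e x : ℝ) = c' := by
    intro x
    rw [inner_e, hc'_def]
    constructor
    · intro h; rw [h]
    · intro h; exact mul_left_cancel₀ (inv_ne_zero hn0.ne') h
  set u₁ : E (m+1) := EuclideanSpace.single (0 : Fin (m+1)) (1:ℝ) with hu₁
  set A := rotA e with hA
  set hmap : E (m+1) → E (m+1) := fun z => A (z + (c' - z 0) • u₁) with hmap_def
  have coord_aux : ∀ (z : E (m+1)) (t : ℝ) (j : Fin (m+1)),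
      (z + t • u₁) j = z j + t * (if j = 0 then 1 else 0) := by
    intro z t j
    rw [PiLp.add_apply, PiLp.smul_apply, hu₁, EuclideanSpace.single_apply, smul_eq_mul]
  have hmap_tail : ∀ z, hmap z = embB e c' (tailE z) := by
    intro z
    rw [hmap_def]
    simp only
    rw [hA]
    unfold embB
    congr 1
    apply (WithLp.equiv 2 _).injective
    funext j
    rw [WithLp.equiv_apply]
    refine Fin.cases ?_ (fun i => ?_) j
    · rw [coord_aux]
      simp [WithLp.equiv_symm_apply, PiLp.toLp_apply]
    · rw [coord_aux]
      simp [WithLp.equiv_symm_apply, PiLp.toLp_apply, tailE, Fin.succ_ne_zero]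
  have inner_hmap : ∀ z, (inner ℝ e (hmap z) : ℝ) = c' := by
    intro z; rw [hmap_tail z]; exact inner_embB he c' (tailE z)
  have facet_mem : ∀ q ∈ Facet ν c k, (inner ℝ e q : ℝ) = c' := by
    intro q hq; exact (hplane q).1 hq.2
  set r : ℝ := (inner ℝ e p₀ : ℝ) - c' with hr_def
  have hr : 0 < r := by
    rw [hr_def, inner_e, hc'_def]
    have := hp₀ k
    have h2 : ‖ν k‖⁻¹ * c k < ‖ν k‖⁻¹ * (inner ℝ (ν k) p₀ : ℝ) :=
      mul_lt_mul_of_pos_left this (inv_pos.2 hn0)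
    linarith
  set g : E (m+1) → E (m+1) := fun z => p₀ + z 0 • (hmap z - p₀) with hg_def
  set π : E (m+1) →L[ℝ] ℝ := EuclideanSpace.proj (0 : Fin (m+1)) with hπ
  have π_apply : ∀ z : E (m+1), π z = z 0 := fun z => rfl
  set L : E (m+1) →L[ℝ] E (m+1) := ContinuousLinearMap.id ℝ (E (m+1)) - π.smulRight u₁ with hL
  set Acl : E (m+1) →L[ℝ] E (m+1) := A.toContinuousLinearEquiv.toContinuousLinearMap with hAcl
  have Acl_apply : ∀ w, Acl w = A w := fun w => rfl
  have L_apply : ∀ z : E (m+1), L z = z - z 0 • u₁ := by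
    intro z
    rw [hL, ContinuousLinearMap.sub_apply, ContinuousLinearMap.id_apply,
      ContinuousLinearMap.smulRight_apply, π_apply]
  have hmap_L : ∀ z, hmap z = A (L z + c' • u₁) := by
    intro z
    rw [hmap_def]
    simp only
    congr 1
    rw [L_apply, sub_smul]
    abel
  set w₀ : E (m+1) := c' • (A u₁) - p₀ with hw₀
  have hFz : ∀ z, hmap z - p₀ = Acl (L z) + w₀ := by
    intro z
    rw [hmap_L, map_add, LinearIsometryEquiv.map_smul, hw₀, Acl_apply]
    abel
  set B : E (m+1) → (E (m+1) →L[ℝ] E (m+1)) :=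
    fun z => z 0 • (Acl.comp L) + π.smulRight (hmap z - p₀) with hB
  have hgderiv : ∀ z, HasFDerivAt g (B z) z := by
    intro z
    have h1 : HasFDerivAt (fun z : E (m+1) => Acl (L z) + w₀) (Acl.comp L) z :=
      (Acl.comp L).hasFDerivAt.add_const w₀
    have h2 : HasFDerivAt (fun z : E (m+1) => π z) π z := π.hasFDerivAt
    have h3 : HasFDerivAt (fun z : E (m+1) => p₀ + π z • (Acl (L z) + w₀))
        (π z • (Acl.comp L) + π.smulRight (Acl (L z) + w₀)) z := (h2.smul h1).const_add p₀
    have heq : (fun z : E (m+1) => p₀ + π z • (Acl (L z) + w₀)) = g := by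
      funext z
      rw [hg_def]
      simp only
      rw [← hFz z, π_apply]
    rw [heq] at h3
    have heq2 : π z • (Acl.comp L) + π.smulRight (Acl (L z) + w₀) = B z := by
      rw [hB, ← hFz z, π_apply]
    rwa [heq2] at h3
  -- determinant computation
  set v' : E (m+1) → E (m+1) := fun z => A.symm (hmap z - p₀) with hv'
  have Au₁ : A u₁ = e := by rw [hA, hu₁]; exact rotA_single he
  have v'0 : ∀ z, (v' z) 0 = -r := by
    intro z
    have h1 : (v' z) 0 = (inner ℝ u₁ (v' z) : ℝ) := by
      rw [hu₁, EuclideanSpace.inner_single_left]; simp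
    have h2 : (inner ℝ u₁ (v' z) : ℝ) = (inner ℝ (A u₁) (hmap z - p₀) : ℝ) := by
      rw [hv']
      simp only
      rw [← LinearIsometryEquiv.inner_map_map A u₁ (A.symm (hmap z - p₀)),
        A.apply_symm_apply]
    rw [h1, h2, Au₁, inner_sub_right, inner_hmap, hr_def]
    ring
  set AL : E (m+1) →ₗ[ℝ] E (m+1) := (A.toLinearEquiv : E (m+1) →ₗ[ℝ] E (m+1)) with hAL
  have hdet : ∀ z, (B z).det = AL.det * ((-r) * (z 0) ^ m) := by
    intro z
    set B₀ : E (m+1) →ₗ[ℝ] E (m+1) :=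
      ((π.smulRight (v' z) : E (m+1) →L[ℝ] E (m+1)) : E (m+1) →ₗ[ℝ] E (m+1))
        + (z 0) • ((L : E (m+1) →L[ℝ] E (m+1)) : E (m+1) →ₗ[ℝ] E (m+1)) with hB₀
    have hcompose : ((B z) : E (m+1) →ₗ[ℝ] E (m+1)) = AL ∘ₗ B₀ := by
      apply LinearMap.ext
      intro w
      have lhs : ((B z) : E (m+1) →ₗ[ℝ] E (m+1)) w
          = z 0 • (Acl (L w)) + (π w) • (hmap z - p₀) := by
        rw [hB]
        simp [ContinuousLinearMap.smulRight_apply]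
      have rhs : (AL ∘ₗ B₀) w = (π w) • (A (v' z)) + z 0 • (A (L w)) := by
        rw [hB₀, hAL]
        simp only [LinearMap.coe_comp, Function.comp_apply, LinearMap.add_apply,
          LinearMap.smul_apply, ContinuousLinearMap.coe_coe,
          ContinuousLinearMap.smulRight_apply, LinearEquiv.coe_coe,
          LinearIsometryEquiv.coe_toLinearEquiv]
        rw [map_add, LinearIsometryEquiv.map_smul, LinearIsometryEquiv.map_smul]
      rw [lhs, rhs, hv']
      simp only
      rw [A.apply_symm_apply, Acl_apply]
      abel
    rw [ContinuousLinearMap.det, hcompose, LinearMap.det_comp]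
    congr 1
    set bas := PiLp.basisFun 2 ℝ (Fin (m+1)) with hbas
    have hbasc : ∀ (i j : Fin (m+1)), (bas j) i = if i = j then (1:ℝ) else 0 := by
      intro i j
      rw [hbas, PiLp.basisFun_apply, PiLp.single_apply]
    have hu₁c : ∀ i : Fin (m+1), u₁ i = if i = 0 then (1:ℝ) else 0 := by
      intro i; rw [hu₁, EuclideanSpace.single_apply]
    have hmat : LinearMap.toMatrix bas bas B₀
        = Matrix.of (fun i j => if j = 0 then (v' z) i else if i = j then z 0 else 0) := by
      ext i j
      rw [LinearMap.toMatrix_apply, hbas, PiLp.basisFun_repr]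
      rw [← hbas]
      have hB₀c : B₀ (bas j) = ((bas j) 0) • (v' z) + z 0 • ((bas j) - ((bas j) 0) • u₁) := by
        rw [hB₀]
        simp only [LinearMap.add_apply, LinearMap.smul_apply, ContinuousLinearMap.coe_coe,
          ContinuousLinearMap.smulRight_apply]
        rw [L_apply, π_apply]
      rw [hB₀c]
      rw [PiLp.add_apply, PiLp.smul_apply, PiLp.smul_apply, PiLp.sub_apply, PiLp.smul_apply]
      rw [hbasc i j, hbasc 0 j, hu₁c i]
      simp only [Matrix.of_apply, smul_eq_mul]
      exact if_entry_aux i j (v' z i) (z 0)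
    rw [← LinearMap.det_toMatrix bas B₀, hmat, det_aux, v'0]
  -- injectivity
  set s : Set (E (m+1)) := {z | z 0 ∈ Set.Ioc (0:ℝ) 1 ∧ hmap z ∈ Facet ν c k} with hs_def
  have hinj : Set.InjOn g s := by
    intro z hz z' hz' hgz
    have hgz0 : ∀ w : E (m+1), (inner ℝ e (g w) : ℝ) = (inner ℝ e p₀ : ℝ) - w 0 * r := by
      intro w
      rw [hg_def]
      simp only
      rw [inner_add_right, real_inner_smul_right, inner_sub_right, inner_hmap, hr_def]
      ring
    have ht : z 0 = z' 0 := by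
      have h1 := congrArg (fun x => (inner ℝ e x : ℝ)) hgz
      simp only [hgz0] at h1
      have h2 : z 0 * r = z' 0 * r := by linarith
      exact mul_right_cancel₀ hr.ne' h2
    have hz0pos : z 0 ≠ 0 := ne_of_gt hz.1.1
    have hmapeq : hmap z = hmap z' := by
      have h1 : z 0 • (hmap z - p₀) = z 0 • (hmap z' - p₀) := by
        have h2 := hgz
        rw [hg_def] at h2
        simp only at h2
        rw [← ht] at h2
        exact add_left_cancel h2
      have h3 := smul_right_injective (E (m+1)) hz0pos h1
      exact sub_left_injective h3
    have h4 : z + (c' - z 0) • u₁ = z' + (c' - z' 0) • u₁ := by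
      apply A.injective
      have h5 := hmapeq
      rw [hmap_def] at h5
      exact h5
    rw [← ht] at h4
    exact add_right_cancel h4
  -- continuity and measurability
  have cont0 : Continuous fun z : E (m+1) => z 0 := π.continuous
  have hmapc : Continuous hmap := by
    rw [hmap_def]
    exact A.continuous.comp (continuous_id.add
      ((continuous_const.sub cont0).smul continuous_const))
  have hs : MeasurableSet s := by
    have : s = (fun z : E (m+1) => z 0) ⁻¹' (Set.Ioc (0:ℝ) 1) ∩ hmap ⁻¹' (Facet ν c k) := rfl
    rw [this]
    exact (measurableSet_Ioc.preimage cont0.measurable).inter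
      ((facet_closed ν c k).measurableSet.preimage hmapc.measurable)
  -- the constants
  obtain ⟨κ, hκtop, hκ⟩ := lintegral_isometry_le (embB_isometry e c')
  set K : ℝ≥0∞ := ENNReal.ofReal (|AL.det| * r) with hK
  set wk : ℝ≥0∞ := ENNReal.ofReal (‖ν k‖⁻¹) with hwk
  have hwk0 : wk ≠ 0 := by
    rw [hwk]
    simp only [ne_eq, ENNReal.ofReal_eq_zero, not_le]
    exact inv_pos.2 hn0
  have hwktop : wk ≠ ⊤ := ENNReal.ofReal_ne_top
  refine ⟨K * κ * wk⁻¹, ?_, g '' s, ?_, ?_⟩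
  · exact ENNReal.mul_ne_top (ENNReal.mul_ne_top ENNReal.ofReal_ne_top hκtop)
      (ENNReal.inv_ne_top.2 hwk0)
  · -- covering
    intro q hq t htI
    have hq0 : (A.symm q) 0 = c' := by
      have h1 : (A.symm q) 0 = (inner ℝ u₁ (A.symm q) : ℝ) := by
        rw [hu₁, EuclideanSpace.inner_single_left]; simp
      have h2 : (inner ℝ u₁ (A.symm q) : ℝ) = (inner ℝ (A u₁) q : ℝ) := by
        rw [← LinearIsometryEquiv.inner_map_map A u₁ (A.symm q), A.apply_symm_apply]
      rw [h1, h2, Au₁]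
      exact facet_mem q hq
    set z : E (m+1) := A.symm q + (t - c') • u₁ with hz_def
    have hz0 : z 0 = t := by
      rw [hz_def, coord_aux, hq0]
      simp
    have hmapz : hmap z = q := by
      rw [hmap_def]
      simp only
      rw [hz0, hz_def]
      have : A.symm q + (t - c') • u₁ + (c' - t) • u₁ = A.symm q := by
        rw [sub_smul, sub_smul]
        abel
      rw [this, A.apply_symm_apply]
    refine ⟨z, ⟨?_, ?_⟩, ?_⟩
    · rw [hz0]; exact htI
    · rw [hmapz]; exact hq
    · rw [hg_def]
      simp only
      rw [hz0, hmapz]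
  · -- the integral estimate
    intro v hv hray
    set ψ : E (m+1) → ℝ≥0∞ := fun x => ENNReal.ofReal (v x) with hψ
    have hψm : Measurable ψ := ENNReal.measurable_ofReal.comp hv
    have hcv := lintegral_image_eq_lintegral_abs_det_fderiv_mul (volume : Measure (E (m+1)))
      hs (fun z _ => (hgderiv z).hasFDerivWithinAt) hinj ψ
    rw [hcv]
    have hptwise : ∀ z ∈ s, ENNReal.ofReal |(B z).det| * ψ (g z) ≤ K * ψ (hmap z) := by
      intro z hz
      have h1 : |(B z).det| ≤ |AL.det| * r := by
        rw [hdet z, abs_mul, abs_mul, abs_neg, abs_of_pos hr, abs_pow]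
        have h2 : |z 0| ^ m ≤ 1 := by
          apply pow_le_one₀ (abs_nonneg _)
          rw [abs_of_pos hz.1.1]
          exact hz.1.2
        exact mul_le_mul_of_nonneg_left (mul_le_of_le_one_right hr.le h2) (abs_nonneg _)
      have h3 : ψ (g z) ≤ ψ (hmap z) := by
        rw [hψ]
        apply ENNReal.ofReal_le_ofReal
        have h4 : hmap z ∈ closure (Poly ν c) := hz.2.1
        have h5 := hray (hmap z) h4 (z 0) hz.1
        rw [hg_def]
        exact h5
      exact mul_le_mul' (ENNReal.ofReal_le_ofReal h1) h3
    calc ∫⁻ z in s, ENNReal.ofReal |(B z).det| * ψ (g z)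
        ≤ ∫⁻ z in s, K * ψ (hmap z) := by
          apply setLIntegral_mono (by exact (hψm.comp hmapc.measurable).const_mul K) hptwise
      _ = K * ∫⁻ z in s, ψ (hmap z) := by
          rw [lintegral_const_mul' _ _ (by rw [hK]; exact ENNReal.ofReal_ne_top)]
      _ = K * ∫⁻ z : E (m+1), (Set.Ioc (0:ℝ) 1).indicator 1 (z 0)
            * ((Facet ν c k).indicator ψ) (embB e c' (tailE z)) := by
          congr 1
          rw [← lintegral_indicator hs]
          apply lintegral_congr
          intro z
          by_cases hzs : z ∈ s
          · rw [Set.indicator_of_mem hzs]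
            have h1 : (Set.Ioc (0:ℝ) 1).indicator (1 : ℝ → ℝ≥0∞) (z 0) = 1 :=
              Set.indicator_of_mem hzs.1 1
            rw [h1, ← hmap_tail z, Set.indicator_of_mem hzs.2, one_mul]
          · rw [Set.indicator_of_notMem hzs]
            rcases (not_and_or.1 hzs) with h | h
            · rw [Set.indicator_of_notMem h, zero_mul]
            · rw [← hmap_tail z, Set.indicator_of_notMem h, mul_zero]
      _ = K * ∫⁻ y : E m, ((Facet ν c k).indicator ψ) (embB e c' y) := by
          congr 1
          exact slab_fubini (fun y => ((Facet ν c k).indicator ψ) (embB e c' y))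
            ((hψm.indicator (facet_closed ν c k).measurableSet).comp
              (embB_isometry e c').continuous.measurable)
      _ ≤ K * (κ * ∫⁻ x, ((Facet ν c k).indicator ψ) x ∂(μH[(m:ℝ)] : Measure (E (m+1)))) := by
          exact mul_le_mul_right (hκ _ (hψm.indicator (facet_closed ν c k).measurableSet)) K
      _ = K * κ * ∫⁻ x in Facet ν c k, ψ x ∂(μH[(m:ℝ)] : Measure (E (m+1))) := by
          rw [lintegral_indicator (facet_closed ν c k).measurableSet, mul_assoc]
      _ ≤ K * κ * (wk⁻¹ * ∫⁻ x, ψ x ∂(bdryMeasure ν c)) := by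
          apply mul_le_mul_right
          have hfacint : wk * ∫⁻ x in Facet ν c k, ψ x ∂(μH[(m:ℝ)] : Measure (E (m+1)))
              ≤ ∫⁻ x, ψ x ∂(bdryMeasure ν c) := by
            have hexp : ((m + 1 : ℕ) : ℝ) - 1 = (m : ℝ) := by push_cast; ring
            rw [bdryMeasure, lintegral_finset_sum_measure]
            have hterm : wk * ∫⁻ x in Facet ν c k, ψ x ∂(μH[(m:ℝ)] : Measure (E (m+1)))
                = ∫⁻ x, ψ x ∂(ENNReal.ofReal (‖ν k‖⁻¹) •
                    ((MeasureTheory.Measure.hausdorffMeasure (((m+1 : ℕ) : ℝ) - 1)).restrict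
                      (Facet ν c k))) := by
              rw [hexp, lintegral_smul_measure, hwk, smul_eq_mul]
            rw [hterm]
            exact Finset.single_le_sum (f := fun j => ∫⁻ x, ψ x ∂(ENNReal.ofReal (‖ν j‖⁻¹) •
              ((MeasureTheory.Measure.hausdorffMeasure (((m+1 : ℕ) : ℝ) - 1)).restrict
                (Facet ν c j)))) (fun _ _ => zero_le) (Finset.mem_univ k)
          calc ∫⁻ x in Facet ν c k, ψ x ∂(μH[(m:ℝ)] : Measure (E (m+1)))
              = wk⁻¹ * (wk * ∫⁻ x in Facet ν c k, ψ x ∂(μH[(m:ℝ)] : Measure (E (m+1)))) := by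
                rw [← mul_assoc, ENNReal.inv_mul_cancel hwk0 hwktop, one_mul]
            _ ≤ wk⁻¹ * ∫⁻ x, ψ x ∂(bdryMeasure ν c) := mul_le_mul_right hfacint _
      _ = K * κ * wk⁻¹ * ∫⁻ x, ψ x ∂(bdryMeasure ν c) := by ring

lemma bdry_finite {d : ℕ} (ν : Fin d → E (m+1)) (c : Fin d → ℝ)
    (hb : Bornology.IsBounded (closure (Poly ν c))) : bdryMeasure ν c Set.univ ≠ ⊤ := by
  rw [bdryMeasure, Measure.finset_sum_apply]
  refine (ENNReal.sum_lt_top.2 fun k _ => ?_).ne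
  rw [Measure.smul_apply, Measure.restrict_apply_univ, smul_eq_mul]
  by_cases hν : ν k = 0
  · rw [hν]
    simp
  · have hn0 : (0:ℝ) < ‖ν k‖ := norm_pos_iff.2 hν
    have he : ‖(‖ν k‖⁻¹ • ν k : E (m+1))‖ = 1 := by
      rw [norm_smul, norm_inv, norm_norm, inv_mul_cancel₀ hn0.ne']
    have hexp : ((m+1 : ℕ) : ℝ) - 1 = (m:ℝ) := by push_cast; ring
    rw [hexp]
    refine ENNReal.mul_lt_top ENNReal.ofReal_lt_top ?_
    refine lt_top_iff_ne_top.2 (hausdorff_finite_of_bounded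
      (embB_isometry (‖ν k‖⁻¹ • ν k) (‖ν k‖⁻¹ * c k)) (hb.subset Set.inter_subset_left) ?_)
    intro x hx
    apply mem_range_embB he
    rw [real_inner_smul_left, hx.2]

end Aux

/-- the interior `L¹`-norm of a normalized convex function is controlled
by its boundary norm. -/
theorem interior_integral_le_boundary_integral
    {n d : ℕ} (hn : 1 ≤ n) (ν : Fin d → E n) (c : Fin d → ℝ)
    (hcomp : IsCompact (closure (Poly ν c)))
    (p₀ : E n) (hp₀ : p₀ ∈ Poly ν c) :
    ∃ C : ℝ, 0 < C ∧ ∀ u : E n → ℝ, ConvexOn ℝ (closure (Poly ν c)) u →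
      ContinuousOn u (closure (Poly ν c)) → u p₀ = 0 →
      (∀ x ∈ closure (Poly ν c), 0 ≤ u x) →
      (∫ x in Poly ν c, u x) ≤ C * ∫ x, u x ∂(bdryMeasure ν c) := by
  obtain ⟨m, rfl⟩ : ∃ m, n = m + 1 := ⟨n - 1, by omega⟩
  classical
  choose C hC T hT hTbound using facet_bound ν c p₀ hp₀
  set S : ℝ≥0∞ := ∑ k, C k with hSdef
  have hStop : S ≠ ⊤ := by
    rw [hSdef]
    exact (ENNReal.sum_lt_top.2 fun k _ => (hC k).lt_top).ne
  refine ⟨S.toReal + 1, by positivity, ?_⟩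
  intro u hconv hcont hup₀ hunn
  obtain ⟨v, hvmeas, hveq, hvout⟩ := exists_extension isClosed_closure hcont
  have hvnn : ∀ x, 0 ≤ v x := by
    intro x
    by_cases hx : x ∈ closure (Poly ν c)
    · rw [hveq x hx]; exact hunn x hx
    · rw [hvout x hx]
  have hp₀cl : p₀ ∈ closure (Poly ν c) := subset_closure hp₀
  have hconvset : Convex ℝ (closure (Poly ν c)) := (poly_convex ν c).closure
  have hray : ∀ q ∈ closure (Poly ν c), ∀ t ∈ Set.Ioc (0:ℝ) 1,
      v (p₀ + t • (q - p₀)) ≤ v q := by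
    intro q hq t ht
    have hcomb : p₀ + t • (q - p₀) = (1-t) • p₀ + t • q := by
      rw [smul_sub, sub_smul, one_smul]; abel
    have hmem : p₀ + t • (q - p₀) ∈ closure (Poly ν c) := by
      rw [hcomb]
      exact hconvset hp₀cl hq (by linarith [ht.2]) ht.1.le (by ring)
    rw [hveq _ hmem, hveq _ hq, hcomb]
    calc u ((1-t) • p₀ + t • q) ≤ (1-t) * u p₀ + t * u q :=
          hconv.2 hp₀cl hq (by linarith [ht.2]) ht.1.le (by ring)
      _ = t * u q := by rw [hup₀]; ring
      _ ≤ u q := mul_le_of_le_one_left (hunn q hq) ht.2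
  set ψ : E (m+1) → ℝ≥0∞ := fun x => ENNReal.ofReal (v x) with hψ
  set J := ∫⁻ x, ψ x ∂(bdryMeasure ν c) with hJ
  have hbdd := hcomp.isBounded
  have hJtop : J ≠ ⊤ := by
    obtain ⟨M, hM⟩ := hcomp.exists_bound_of_continuousOn hcont
    have hvM : ∀ x, v x ≤ max M 0 := by
      intro x
      by_cases hx : x ∈ closure (Poly ν c)
      · rw [hveq x hx]
        calc u x ≤ |u x| := le_abs_self _
          _ ≤ M := by rw [← Real.norm_eq_abs]; exact hM x hx
          _ ≤ max M 0 := le_max_left _ _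
      · rw [hvout x hx]; exact le_max_right _ _
    rw [hJ]
    have h1 : ∫⁻ x, ψ x ∂(bdryMeasure ν c)
        ≤ ∫⁻ _x, ENNReal.ofReal (max M 0) ∂(bdryMeasure ν c) :=
      lintegral_mono fun x => ENNReal.ofReal_le_ofReal (hvM x)
    rw [lintegral_const] at h1
    exact (h1.trans_lt (ENNReal.mul_lt_top ENNReal.ofReal_lt_top
      (bdry_finite ν c hbdd).lt_top)).ne
  have hIbound : ∫⁻ x in Poly ν c, ψ x ≤ S * J := by
    have hsub : Poly ν c ⊆ (⋃ k, T k) ∪ {p₀} := by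
      intro x hx
      by_cases hxp : x = p₀
      · exact Or.inr (by simp [hxp])
      · rcases ray_exit ν c hbdd hx hxp with ⟨k, q, hq, t, ht, hxeq⟩
        exact Or.inl (Set.mem_iUnion.2 ⟨k, hxeq ▸ hT k q hq t ht⟩)
    calc ∫⁻ x in Poly ν c, ψ x
        ≤ ∫⁻ x in (⋃ k, T k) ∪ {p₀}, ψ x := lintegral_mono_set hsub
      _ ≤ (∫⁻ x in ⋃ k, T k, ψ x) + ∫⁻ x in ({p₀} : Set (E (m+1))), ψ x :=
          lintegral_union_le _ _ _
      _ = ∫⁻ x in ⋃ k, T k, ψ x := by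
          have h0 : (volume : Measure (E (m+1))).restrict {p₀} = 0 :=
            Measure.restrict_eq_zero.2 (measure_singleton _)
          rw [h0, lintegral_zero_measure, add_zero]
      _ ≤ ∑' k, ∫⁻ x in T k, ψ x := lintegral_iUnion_le _ _
      _ = ∑ k, ∫⁻ x in T k, ψ x := tsum_fintype _
      _ ≤ ∑ k, C k * J := Finset.sum_le_sum fun k _ => hTbound k v hvmeas hray
      _ = S * J := by rw [hSdef, Finset.sum_mul]
  have hPolyMeas : MeasurableSet (Poly ν c) := (poly_open ν c).measurableSet
  have hL : ∫ x in Poly ν c, u x = (∫⁻ x in Poly ν c, ψ x).toReal := by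
    have h1 : ∫ x in Poly ν c, u x = ∫ x in Poly ν c, v x :=
      setIntegral_congr_fun hPolyMeas fun x hx => (hveq x (subset_closure hx)).symm
    rw [h1, integral_eq_lintegral_of_nonneg_ae
      (Filter.Eventually.of_forall fun x => hvnn x) hvmeas.aestronglyMeasurable]
  have hR : ∫ x, u x ∂(bdryMeasure ν c) = J.toReal := by
    have h1 : ∫ x, u x ∂(bdryMeasure ν c) = ∫ x, v x ∂(bdryMeasure ν c) := by
      apply integral_congr_ae
      rw [Filter.EventuallyEq, ae_iff]
      refine measure_mono_null (fun x hx => ?_) (bdry_null_compl ν c)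
      simp only [Set.mem_setOf_eq] at hx
      intro hxc
      exact hx (hveq x hxc).symm
    rw [h1, hJ, integral_eq_lintegral_of_nonneg_ae
      (Filter.Eventually.of_forall fun x => hvnn x) hvmeas.aestronglyMeasurable]
  rw [hL, hR]
  have hSJ : S * J ≠ ⊤ := ENNReal.mul_ne_top hStop hJtop
  have h2 := ENNReal.toReal_mono hSJ hIbound
  rw [ENNReal.toReal_mul] at h2
  nlinarith [ENNReal.toReal_nonneg (a := J), ENNReal.toReal_nonneg (a := S)]


end ToricKS
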